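/- In the polynomial ring ℤ[s,t], with S_m(s,t) = Σ_{i=0}^{m} s^{m-i} t^i and p_k = S_6(s^k,t^k), the following identity holds: p_1⁵ + 10*p_1³*p_2 + 15*p_1*p_2² + 20*p_1²*p_3 + 20*p_2*p_3 + 30*p_1*p_4 + 24*p_5 = 120*( S_30 + (s*t)²*S_26 + (s*t)³*S_24 + 2*(s*t)⁴*S_22 + 2*(s*t)⁵*S_20 + 3*(s*t)⁶*S_18 + 2*(s*t)⁷*S_16 + 4*(s*t)⁸*S_14 + 3*(s*t)⁹*S_12 + 4*(s*t)^{10}*S_10 + 2*(s*t)^{11}*S_8 + 4*(s*t)^{12}*S_6 + (s*t)^{13}*S_4 + 2*(s*t)^{14}*S_2 ), where each S_m is evaluated at (s,t). (This is the character identity expressing the isotypical decomposition of Sym⁵(Sym⁶(V)) with multiplicities 1,1,1,2,2,3,2,4,3,4,2,4,1,2 for A[30,0], A[28,2], A[27,3], A[26,4], A[25,5], A[24,6], A[23,7], A[22,8], A[21,9], A[20,10], A[19,11], A[18,12], A[17,13], A[16,14].) -/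
import Mathlib


open MvPolynomial

/-- `S m = Σ_{i=0}^{m} s^{m-i} t^i ∈ ℤ[s,t]`, the character of `Sym^m` of the standard
representation of `GL(2,ℂ)` at `diag(s,t)`. -/
noncomputable def S (m : ℕ) : MvPolynomial (Fin 2) ℤ :=
  ∑ i ∈ Finset.range (m + 1), X 0 ^ (m - i) * X 1 ^ i

/-- `P k = S_6(s^k, t^k) = Σ_{i=0}^{6} s^{k(6-i)} t^{k i}`. -/
noncomputable def P (k : ℕ) : MvPolynomial (Fin 2) ℤ :=
  ∑ i ∈ Finset.range 7, X 0 ^ (k * (6 - i)) * X 1 ^ (k * i)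

/-- The character identity expressing the isotypical decomposition of `Sym⁵(Sym⁶(V))`
with multiplicities 1,1,1,2,2,3,2,4,3,4,2,4,1,2 for `A[30,0], A[28,2], A[27,3], A[26,4],
A[25,5], A[24,6], A[23,7], A[22,8], A[21,9], A[20,10], A[19,11], A[18,12], A[17,13], A[16,14]`. -/
theorem sym5_sym6_decomposition :
    P 1 ^ 5 + 10 * P 1 ^ 3 * P 2 + 15 * P 1 * P 2 ^ 2 + 20 * P 1 ^ 2 * P 3 +
        20 * P 2 * P 3 + 30 * P 1 * P 4 + 24 * P 5 =
      120 * (S 30 + (X 0 * X 1) ^ 2 * S 26 + (X 0 * X 1) ^ 3 * S 24 +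
        2 * (X 0 * X 1) ^ 4 * S 22 + 2 * (X 0 * X 1) ^ 5 * S 20 + 3 * (X 0 * X 1) ^ 6 * S 18 +
        2 * (X 0 * X 1) ^ 7 * S 16 + 4 * (X 0 * X 1) ^ 8 * S 14 + 3 * (X 0 * X 1) ^ 9 * S 12 +
        4 * (X 0 * X 1) ^ 10 * S 10 + 2 * (X 0 * X 1) ^ 11 * S 8 + 4 * (X 0 * X 1) ^ 12 * S 6 +
        (X 0 * X 1) ^ 13 * S 4 + 2 * (X 0 * X 1) ^ 14 * S 2) := by
  simp only [S, P, Finset.sum_range_succ, Finset.sum_range_zero]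
  norm_num
  ring
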